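/- arXiv:2412.15861 — 3 statements merged into one kernel-verified Lean document; each statement's English description precedes it below -/
import Mathlib

section
/- For a probability measure μ on a measurable space X and measurable functions f, g : X → ℝ with finite p-th absolute moments, the Tukey 'norm' ‖f‖_{T_p(μ)} := (∫ T_p(f) dμ)^{1/p} satisfies the triangle inequality ‖f+g‖_{T_p(μ)} ≤ ‖f‖_{T_p(μ)} + ‖g‖_{T_p(μ)}. -/
/-!
Since `tukey p τ x = (min |x| τ) ^ p`, the Tukey "norm" of `f` is the `L^p` norm of the truncation
`min |f| τ`, which is bounded and hence in every `L^p` of a finite measure. Truncation is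
subadditive, `min |a + b| τ ≤ min |a| τ + min |b| τ`, so Minkowski's inequality for the
truncations gives the triangle inequality.
-/

open MeasureTheory

/-- The p-Tukey loss with threshold τ. -/
noncomputable def tukey (p τ x : ℝ) : ℝ := if |x| ≤ τ then |x| ^ p else τ ^ p

theorem tukey_eq_min_abs_rpow (p τ x : ℝ) : tukey p τ x = min |x| τ ^ p := by
  unfold tukey
  split_ifs with h
  · rw [min_eq_left h]
  · rw [min_eq_right (le_of_not_ge h)]

theorem min_abs_add_le {τ : ℝ} (hτ : 0 ≤ τ) (a b : ℝ) :
    min |a + b| τ ≤ min |a| τ + min |b| τ := by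
  simp only [min_def]
  split_ifs <;> linarith [abs_add_le a b, abs_nonneg a, abs_nonneg b]

section

variable {X : Type*} [MeasurableSpace X] {μ : Measure X} {τ : ℝ} {f g : X → ℝ}

theorem memLp_min_abs [IsFiniteMeasure μ] (hτ : 0 ≤ τ) (hf : AEStronglyMeasurable f μ)
    (q : ENNReal) : MemLp (fun x => min |f x| τ) q μ :=
  .of_bound (by fun_prop) τ <| .of_forall fun x => by
    rw [Real.norm_of_nonneg (le_min (abs_nonneg _) hτ)]
    exact min_le_right _ _

theorem integral_tukey_rpow_inv_eq_eLpNorm [IsFiniteMeasure μ] {p : ℝ} (hp : 0 < p)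
    (hτ : 0 ≤ τ) (hf : AEStronglyMeasurable f μ) :
    (∫ x, tukey p τ (f x) ∂μ) ^ (1 / p) =
      (eLpNorm (fun x => min |f x| τ) (ENNReal.ofReal p) μ).toReal := by
  rw [(memLp_min_abs hτ hf _).eLpNorm_eq_integral_rpow_norm (by simpa using hp)
      ENNReal.ofReal_ne_top, ENNReal.toReal_ofReal (by positivity), ENNReal.toReal_ofReal hp.le,
    one_div]
  simp only [Real.norm_of_nonneg (le_min (abs_nonneg _) hτ), tukey_eq_min_abs_rpow]

theorem eLpNorm_min_abs_add_le {q : ENNReal} (hq : 1 ≤ q) (hτ : 0 ≤ τ)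
    (hf : AEStronglyMeasurable f μ) (hg : AEStronglyMeasurable g μ) :
    eLpNorm (fun x => min |f x + g x| τ) q μ ≤
      eLpNorm (fun x => min |f x| τ) q μ + eLpNorm (fun x => min |g x| τ) q μ := by
  refine (eLpNorm_mono_real fun x => ?_).trans (eLpNorm_add_le (by fun_prop) (by fun_prop) hq)
  rw [Real.norm_of_nonneg (le_min (abs_nonneg _) hτ)]
  exact min_abs_add_le hτ (f x) (g x)

end

theorem tukey_norm_triangle_general {X : Type*} [MeasurableSpace X]
    (μ : Measure X) [IsProbabilityMeasure μ]
    (p τ : ℝ) (hp : 1 ≤ p) (hτ : 0 ≤ τ) (f g : X → ℝ)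
    (hf : Measurable f) (hg : Measurable g) :
    (∫ x, tukey p τ (f x + g x) ∂μ) ^ (1 / p) ≤
      (∫ x, tukey p τ (f x) ∂μ) ^ (1 / p) + (∫ x, tukey p τ (g x) ∂μ) ^ (1 / p) := by
  have hp0 : 0 < p := zero_lt_one.trans_le hp
  have hf' := hf.aestronglyMeasurable (μ := μ)
  have hg' := hg.aestronglyMeasurable (μ := μ)
  have hf_fin := (memLp_min_abs hτ hf' (ENNReal.ofReal p)).eLpNorm_ne_top
  have hg_fin := (memLp_min_abs hτ hg' (ENNReal.ofReal p)).eLpNorm_ne_top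
  rw [integral_tukey_rpow_inv_eq_eLpNorm (f := fun x => f x + g x) hp0 hτ (hf'.add hg'),
    integral_tukey_rpow_inv_eq_eLpNorm hp0 hτ hf', integral_tukey_rpow_inv_eq_eLpNorm hp0 hτ hg',
    ← ENNReal.toReal_add hf_fin hg_fin]
  exact ENNReal.toReal_mono (ENNReal.add_ne_top.2 ⟨hf_fin, hg_fin⟩)
    (eLpNorm_min_abs_add_le (by simpa using hp) hτ hf' hg')

/-- Triangle inequality for the Tukey `norm`. -/
theorem tukey_norm_triangle {X : Type*} [MeasurableSpace X]
    (μ : Measure X) [IsProbabilityMeasure μ]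
    (p τ : ℝ) (hp : 1 ≤ p) (hτ : 0 ≤ τ) (f g : X → ℝ)
    (hf : Measurable f) (hg : Measurable g)
    (hfp : Integrable (fun x => |f x| ^ p) μ)
    (hgp : Integrable (fun x => |g x| ^ p) μ) :
    (∫ x, tukey p τ (f x + g x) ∂μ) ^ (1 / p) ≤
      (∫ x, tukey p τ (f x) ∂μ) ^ (1 / p) + (∫ x, tukey p τ (g x) ∂μ) ^ (1 / p) :=
  tukey_norm_triangle_general μ p τ hp hτ f g hf hg
end

section
/- Let μ, ν be probability measures on a metric space X and μ' = (1−ε)μ + ε μ_c a Huber ε-contamination of μ by an arbitrary probability measure μ_c. Then the Tukey-truncated 1-Wasserstein cost satisfies W_{T_1}(μ', ν) ≤ τ ε + W_{T_1}(μ, ν), where W_{T_1}(α,β) = inf over couplings π of ∫ min(d_X(x,y), τ) dπ(x,y). -/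
open MeasureTheory

/-- The truncated 1-Wasserstein cost `W_{T_1}` with threshold τ. -/
noncomputable def Wtrunc {X : Type*} [MeasurableSpace X] [MetricSpace X]
    (μ ν : Measure X) (τ : ℝ) : ℝ :=
  sInf { r | ∃ π : Measure (X × X), IsProbabilityMeasure π ∧ π.fst = μ ∧ π.snd = ν ∧
    r = ∫ z, min (dist z.1 z.2) τ ∂π }

lemma integrable_truncCost {X : Type*} [MetricSpace X] [SecondCountableTopology X] [MeasurableSpace X] [BorelSpace X]
    (τ : ℝ) (hτ : 0 ≤ τ) (m : Measure (X × X)) [IsFiniteMeasure m] :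
    Integrable (fun z : X × X => min (dist z.1 z.2) τ) m := by
  have hc : Continuous (fun z : X × X => min (dist z.1 z.2) τ) :=
    (continuous_fst.dist continuous_snd).min continuous_const
  refine Integrable.mono' (integrable_const τ) hc.aestronglyMeasurable ?_
  filter_upwards with z
  rw [Real.norm_eq_abs, abs_of_nonneg (le_min dist_nonneg hτ)]
  exact min_le_right _ _

/-- Robustness of the truncated Wasserstein cost to Huber ε-contamination. -/
theorem Wtrunc_huber_contamination {X : Type*} [MetricSpace X] [SecondCountableTopology X]
    [CompleteSpace X] [MeasurableSpace X] [BorelSpace X]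
    (μ ν μc : Measure X)
    [IsProbabilityMeasure μ] [IsProbabilityMeasure ν] [IsProbabilityMeasure μc]
    (τ ε : ℝ) (hτ : 0 ≤ τ) (hε : 0 < ε) (hε1 : ε < 1) :
    Wtrunc (ENNReal.ofReal (1 - ε) • μ + ENNReal.ofReal ε • μc) ν τ
      ≤ τ * ε + Wtrunc μ ν τ := by
  set f : X × X → ℝ := fun z => min (dist z.1 z.2) τ with hf
  have hf0 : ∀ z, 0 ≤ f z := fun z => le_min dist_nonneg hτ
  have hfτ : ∀ z, f z ≤ τ := fun z => min_le_right _ _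
  set S := { r | ∃ π : Measure (X × X), IsProbabilityMeasure π ∧ π.fst = μ ∧ π.snd = ν ∧
    r = ∫ z, f z ∂π } with hS
  set S' := { r | ∃ π : Measure (X × X), IsProbabilityMeasure π ∧
    π.fst = ENNReal.ofReal (1 - ε) • μ + ENNReal.ofReal ε • μc ∧ π.snd = ν ∧
    r = ∫ z, f z ∂π } with hS'
  have hbdd' : BddBelow S' := by
    refine ⟨0, ?_⟩
    rintro r ⟨π, hπ, -, -, rfl⟩
    exact integral_nonneg hf0
  -- the reference set is nonempty
  have hSne : S.Nonempty := by
    refine ⟨∫ z, f z ∂(μ.prod ν), μ.prod ν, inferInstance, Measure.fst_prod,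
      Measure.snd_prod, rfl⟩
  have key : ∀ r ∈ S, Wtrunc (ENNReal.ofReal (1 - ε) • μ + ENNReal.ofReal ε • μc) ν τ
      ≤ τ * ε + r := by
    rintro r ⟨π, hπ, hfst, hsnd, rfl⟩
    set π' : Measure (X × X) :=
      ENNReal.ofReal (1 - ε) • π + ENNReal.ofReal ε • (μc.prod ν) with hπ'
    have h1ε : (0:ℝ) ≤ 1 - ε := by linarith
    have hπ'prob : IsProbabilityMeasure π' := by
      constructor
      simp [hπ', measure_univ, ← ENNReal.ofReal_add h1ε hε.le]
    have hfst' : π'.fst = ENNReal.ofReal (1 - ε) • μ + ENNReal.ofReal ε • μc := by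
      rw [hπ', Measure.fst, Measure.map_add _ _ measurable_fst,
        Measure.map_smul, Measure.map_smul, ← Measure.fst, ← Measure.fst, hfst,
        Measure.fst_prod]
    have hsnd' : π'.snd = ν := by
      rw [hπ', Measure.snd, Measure.map_add _ _ measurable_snd,
        Measure.map_smul, Measure.map_smul, ← Measure.snd, ← Measure.snd, hsnd,
        Measure.snd_prod, ← add_smul, ← ENNReal.ofReal_add h1ε hε.le]
      simp
    have hint1 : Integrable f π := integrable_truncCost τ hτ π
    have hint2 : Integrable f (μc.prod ν) := integrable_truncCost τ hτ _
    have hval : ∫ z, f z ∂π' =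
        (1 - ε) * ∫ z, f z ∂π + ε * ∫ z, f z ∂(μc.prod ν) := by
      rw [hπ', integral_add_measure
          (hint1.smul_measure ENNReal.ofReal_ne_top)
          (hint2.smul_measure ENNReal.ofReal_ne_top),
        integral_smul_measure, integral_smul_measure,
        ENNReal.toReal_ofReal h1ε, ENNReal.toReal_ofReal hε.le]
      simp
    have hle : Wtrunc (ENNReal.ofReal (1 - ε) • μ + ENNReal.ofReal ε • μc) ν τ ≤
        ∫ z, f z ∂π' := csInf_le hbdd' ⟨π', hπ'prob, hfst', hsnd', rfl⟩
    have hb1 : ∫ z, f z ∂(μc.prod ν) ≤ τ := by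
      calc ∫ z, f z ∂(μc.prod ν) ≤ ∫ _z, τ ∂(μc.prod ν) :=
            integral_mono hint2 (integrable_const τ) hfτ
        _ = τ := by simp
    have hb2 : 0 ≤ ∫ z, f z ∂π := integral_nonneg hf0
    have : ∫ z, f z ∂π' ≤ τ * ε + ∫ z, f z ∂π := by
      rw [hval]; nlinarith
    linarith
  have h2 : Wtrunc (ENNReal.ofReal (1 - ε) • μ + ENNReal.ofReal ε • μc) ν τ - τ * ε ≤
      Wtrunc μ ν τ := le_csInf hSne (fun r hr => by linarith [key r hr])
  linarith
end

section
/- Fix p ∈ [1,∞) and a Polish metric space (X,d_X). For the metric cost truncated at τ = 2λ, and any coupling π of probability measures μ, ν on X, the diagonal distortion bound holds: ∫∫ min(|d_X(x,x') − d_X(y,y')|, τ) d(π⊗π) ≤ 2 ∫ min(d_X(x,y), τ) dπ. Consequently the (1,2λ)-Tukey-GW distance (with the factor 1/2) is a lower bound for the λ-ROBOT distance W_{1,2λ}(μ,ν) = inf_π ∫ min(d_X(x,y), 2λ) dπ. -/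
open MeasureTheory

lemma min_trunc_add {a b c τ : ℝ} (hτ : 0 ≤ τ) (h : a ≤ b + c) (hb : 0 ≤ b) (hc : 0 ≤ c) :
    min a τ ≤ min b τ + min c τ := by
  rcases le_total b τ with h1 | h1 <;> rcases le_total c τ with h2 | h2
  · rw [min_eq_left h1, min_eq_left h2]; exact le_trans (min_le_left _ _) h
  · rw [min_eq_left h1, min_eq_right h2]
    have := min_le_right a τ; linarith
  · rw [min_eq_right h1, min_eq_left h2]
    have := min_le_right a τ; linarith
  · rw [min_eq_right h1, min_eq_right h2]
    have := min_le_right a τ; linarith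

lemma integrable_cont_bdd {Y : Type*} [MeasurableSpace Y] [TopologicalSpace Y]
    [OpensMeasurableSpace Y] (m : Measure Y) [IsFiniteMeasure m] {f : Y → ℝ}
    (hf : Continuous f) {C : ℝ} (hbd : ∀ y, |f y| ≤ C) : Integrable f m :=
  (integrable_const C).mono' hf.aestronglyMeasurable (Filter.Eventually.of_forall hbd)

/-- Diagonal distortion bound for the truncated cost, and the consequence that the
(1,2λ)-Tukey-GW distance lower bounds the λ-ROBOT distance `W_{1,2λ}`. -/
theorem TGW_le_ROBOT {X : Type*} [MetricSpace X] [SecondCountableTopology X]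
    [CompleteSpace X] [MeasurableSpace X] [BorelSpace X]
    (μ ν : Measure X) [IsProbabilityMeasure μ] [IsProbabilityMeasure ν]
    (lam : ℝ) (hlam : 0 ≤ lam) :
    (∀ π : Measure (X × X), IsProbabilityMeasure π → π.fst = μ → π.snd = ν →
      ∫ z, min |dist z.1.1 z.2.1 - dist z.1.2 z.2.2| (2 * lam) ∂(π.prod π)
        ≤ 2 * ∫ z, min (dist z.1 z.2) (2 * lam) ∂π) ∧
    sInf { r | ∃ π : Measure (X × X), IsProbabilityMeasure π ∧ π.fst = μ ∧ π.snd = ν ∧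
        r = (1 / 2) * ∫ z, min |dist z.1.1 z.2.1 - dist z.1.2 z.2.2| (2 * lam) ∂(π.prod π) }
      ≤ sInf { r | ∃ π : Measure (X × X), IsProbabilityMeasure π ∧ π.fst = μ ∧ π.snd = ν ∧
        r = ∫ z, min (dist z.1 z.2) (2 * lam) ∂π } := by
  set τ : ℝ := 2 * lam with hτdef
  have hτ : 0 ≤ τ := by positivity
  set f : X × X → ℝ := fun z => min (dist z.1 z.2) τ with hf
  set g : (X × X) × (X × X) → ℝ := fun z => min |dist z.1.1 z.2.1 - dist z.1.2 z.2.2| τ with hg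
  have hfc : Continuous f := by
    apply Continuous.min _ continuous_const
    exact continuous_fst.dist continuous_snd
  have hgc : Continuous g := by
    apply Continuous.min _ continuous_const
    apply Continuous.abs
    exact ((continuous_fst.fst.dist continuous_snd.fst).sub
      (continuous_fst.snd.dist continuous_snd.snd))
  have hfb : ∀ z, |f z| ≤ τ := by
    intro z
    rw [abs_le]
    constructor
    · have : (0:ℝ) ≤ f z := le_min dist_nonneg hτ
      linarith
    · exact min_le_right _ _
  have hgb : ∀ z, |g z| ≤ τ := by
    intro z
    rw [abs_le]
    constructor
    · have : (0:ℝ) ≤ g z := le_min (abs_nonneg _) hτ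
      linarith
    · exact min_le_right _ _
  have key : ∀ π : Measure (X × X), IsProbabilityMeasure π → π.fst = μ → π.snd = ν →
      ∫ z, g z ∂(π.prod π) ≤ 2 * ∫ z, f z ∂π := by
    intro π hπ _ _
    have hfπ : Integrable f π := integrable_cont_bdd π hfc hfb
    have hg1 : Integrable g (π.prod π) := integrable_cont_bdd _ hgc hgb
    have h1 : Integrable (fun z : (X × X) × (X × X) => f z.1) (π.prod π) :=
      integrable_cont_bdd _ (hfc.comp continuous_fst) (fun z => hfb z.1)
    have h2 : Integrable (fun z : (X × X) × (X × X) => f z.2) (π.prod π) :=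
      integrable_cont_bdd _ (hfc.comp continuous_snd) (fun z => hfb z.2)
    have hpt : ∀ z : (X × X) × (X × X), g z ≤ f z.1 + f z.2 := by
      intro z
      apply min_trunc_add hτ _ dist_nonneg dist_nonneg
      have := dist_dist_dist_le z.1.1 z.2.1 z.1.2 z.2.2
      rwa [Real.dist_eq] at this
    calc ∫ z, g z ∂(π.prod π) ≤ ∫ z, (f z.1 + f z.2) ∂(π.prod π) :=
          integral_mono hg1 (h1.add h2) hpt
      _ = (∫ z, f z.1 ∂(π.prod π)) + ∫ z, f z.2 ∂(π.prod π) := integral_add h1 h2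
      _ = (∫ z, f z ∂π) + ∫ z, f z ∂π := by
          congr 1
          · rw [← integral_map measurable_fst.aemeasurable hfc.aestronglyMeasurable,
              Measure.map_fst_prod]
            simp
          · rw [← integral_map measurable_snd.aemeasurable hfc.aestronglyMeasurable,
              Measure.map_snd_prod]
            simp
      _ = 2 * ∫ z, f z ∂π := by ring
  refine ⟨key, ?_⟩
  apply le_csInf
  · exact ⟨∫ z, f z ∂(μ.prod ν), μ.prod ν, inferInstance, Measure.fst_prod, Measure.snd_prod, rfl⟩
  · rintro r ⟨π, hπ, hfst, hsnd, rfl⟩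
    have hb : BddBelow { r | ∃ π : Measure (X × X), IsProbabilityMeasure π ∧ π.fst = μ ∧
        π.snd = ν ∧ r = (1 / 2) * ∫ z, g z ∂(π.prod π) } := by
      refine ⟨0, ?_⟩
      rintro s ⟨π', hπ', _, _, rfl⟩
      have : 0 ≤ ∫ z, g z ∂(π'.prod π') :=
        integral_nonneg fun z => le_min (abs_nonneg _) hτ
      linarith
    refine le_trans (csInf_le hb ⟨π, hπ, hfst, hsnd, rfl⟩) ?_
    have := key π hπ hfst hsnd
    linarith
end
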